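/- arXiv:0808.0157 — 3 statements merged into one kernel-verified Lean document; each statement's English description precedes it below -/
import Mathlib

section
/- Let Θ ⊂ ℝ²_{≥0} be a lattice polygon (the convex hull of a finite subset of ℤ²_{≥0}) with nonempty interior. Then the moment map φ_Θ, restricted to the open positive quadrant ℝ²_{>0}, is a C^∞ diffeomorphism onto the interior of Θ: it is injective, smooth, its image is exactly int Θ, and its inverse is smooth. -/
noncomputable section

/-- Embedding of an integral point into the real plane. -/
def latticeEmb (p : ℤ × ℤ) : ℝ × ℝ := ((p.1 : ℝ), (p.2 : ℝ))

/-- The open positive quadrant ℝ²_{>0}. -/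
def posQuad : Set (ℝ × ℝ) := {q : ℝ × ℝ | 0 < q.1 ∧ 0 < q.2}


open Real Finset Filter

/-- dot product on ℝ² -/
def dotp (u v : ℝ × ℝ) : ℝ := u.1 * v.1 + u.2 * v.2

def Efun (p : ℤ × ℤ) (z : ℝ × ℝ) : ℝ := Real.exp (dotp (latticeEmb p) z)

def Zfun (T : Finset (ℤ × ℤ)) (z : ℝ × ℝ) : ℝ := ∑ p ∈ T, Efun p z

def Ffun (T : Finset (ℤ × ℤ)) (z : ℝ × ℝ) : ℝ × ℝ :=
  (Zfun T z)⁻¹ • ∑ p ∈ T, Efun p z • latticeEmb p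

/-- the linear functional `dotp (latticeEmb p) ·` as a CLM -/
def dlin (p : ℤ × ℤ) : (ℝ × ℝ) →L[ℝ] ℝ :=
  (latticeEmb p).1 • (ContinuousLinearMap.fst ℝ ℝ ℝ) + (latticeEmb p).2 • (ContinuousLinearMap.snd ℝ ℝ ℝ)

lemma zpow_eq_exp_log {x : ℝ} (hx : 0 < x) (m : ℤ) : x ^ m = Real.exp (m * Real.log x) := by
  rw [← Real.rpow_intCast x m, Real.rpow_def_of_pos hx, mul_comm]


lemma latticeEmb_injective : Function.Injective latticeEmb := by
  intro p q h
  have h1 := congrArg Prod.fst h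
  have h2 := congrArg Prod.snd h
  simp only [latticeEmb, Int.cast_injective.eq_iff] at h1 h2
  exact Prod.ext (by exact_mod_cast h1) (by exact_mod_cast h2)

lemma Efun_pos (p : ℤ × ℤ) (z : ℝ × ℝ) : 0 < Efun p z := Real.exp_pos _

lemma Zfun_pos {T : Finset (ℤ × ℤ)} (hT : T.Nonempty) (z : ℝ × ℝ) : 0 < Zfun T z :=
  Finset.sum_pos (fun p _ => Efun_pos p z) hT

lemma dotp_sum {ι} (T : Finset ι) (f : ι → ℝ × ℝ) (v : ℝ × ℝ) :
    dotp (∑ i ∈ T, f i) v = ∑ i ∈ T, dotp (f i) v := by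
  simp [dotp, Finset.sum_mul, Prod.fst_sum, Prod.snd_sum, Finset.sum_add_distrib]

lemma dotp_smul (a : ℝ) (u v : ℝ × ℝ) : dotp (a • u) v = a * dotp u v := by
  simp [dotp]; ring

lemma dotp_sub (u w v : ℝ × ℝ) : dotp (u - w) v = dotp u v - dotp w v := by
  simp [dotp]; ring

lemma dotp_add_right (u z d : ℝ × ℝ) : dotp u (z + d) = dotp u z + dotp u d := by
  simp [dotp]; ring

lemma dotp_linear (v : ℝ × ℝ) : IsLinearMap ℝ (fun x : ℝ × ℝ => dotp x v) := by
  constructor <;> intros <;> simp [dotp] <;> ring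

lemma exists_dotp_ne {Θ : Set (ℝ × ℝ)} (hdim : (interior Θ).Nonempty)
    (A : Set (ℝ × ℝ)) (hT : Θ ⊆ convexHull ℝ A) {v : ℝ × ℝ} (hv : v ≠ 0) :
    ¬ (∃ c : ℝ, ∀ x ∈ A, dotp x v = c) := by
  rintro ⟨c, hc⟩
  obtain ⟨x0, hx0⟩ := hdim
  have hH : Θ ⊆ {x : ℝ × ℝ | dotp x v = c} :=
    hT.trans (convexHull_min (fun x hx => hc x hx) (convex_hyperplane (dotp_linear v) c))
  obtain ⟨ε, hε, hball⟩ := Metric.isOpen_iff.1 isOpen_interior x0 hx0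
  have hvv : 0 < dotp v v := by
    have : v.1 ≠ 0 ∨ v.2 ≠ 0 := by
      by_contra h; push_neg at h; exact hv (Prod.ext h.1 h.2)
    have h1 : 0 ≤ v.1 * v.1 := mul_self_nonneg _
    have h2 : 0 ≤ v.2 * v.2 := mul_self_nonneg _
    rcases this with h | h
    · have : 0 < v.1 * v.1 := by positivity
      simp only [dotp]; linarith
    · have : 0 < v.2 * v.2 := by positivity
      simp only [dotp]; linarith
  set δ := ε / (2 * (‖v‖ + 1)) with hδ
  have hnv : (0:ℝ) < ‖v‖ + 1 := by positivity
  have hδpos : 0 < δ := by positivity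
  have hx1 : x0 ∈ Θ := interior_subset hx0
  have hx2 : x0 + δ • v ∈ Θ := by
    apply interior_subset; apply hball
    simp only [Metric.mem_ball, dist_eq_norm, add_sub_cancel_left, norm_smul, Real.norm_eq_abs,
      abs_of_pos hδpos]
    calc δ * ‖v‖ < δ * (‖v‖ + 1) := by nlinarith
      _ = ε / 2 := by rw [hδ]; field_simp
      _ < ε := by linarith
  have e1 : dotp x0 v = c := hH hx1
  have e2 : dotp (x0 + δ • v) v = c := hH hx2
  have : dotp (x0 + δ • v) v = dotp x0 v + δ * dotp v v := by simp [dotp]; ring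
  rw [this, e1] at e2
  nlinarith

/-- Lagrange-type identity. -/

lemma lagrange_identity {ι} (T : Finset ι) (a b : ι → ℝ) :
    ∑ p ∈ T, ∑ q ∈ T, a p * a q * (b p - b q)^2
      = 2 * ((∑ p ∈ T, a p) * (∑ p ∈ T, a p * (b p)^2) - (∑ p ∈ T, a p * b p)^2) := by
  have expand : ∀ p q, a p * a q * (b p - b q)^2
      = (a p * b p ^ 2) * a q - 2 * ((a p * b p) * (a q * b q)) + a p * (a q * b q ^ 2) := by
    intros; ring
  simp only [expand, Finset.sum_add_distrib, Finset.sum_sub_distrib, ← Finset.mul_sum,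
    ← Finset.sum_mul]
  ring

lemma lagrange_eq {ι} (T : Finset ι) (a b : ι → ℝ) (ha : ∀ i ∈ T, 0 < a i)
    (h : (∑ i ∈ T, a i * b i)^2 = (∑ i ∈ T, a i) * (∑ i ∈ T, a i * (b i)^2)) :
    ∀ p ∈ T, ∀ q ∈ T, b p = b q := by
  intro p hp q hq
  have hz : ∑ p ∈ T, ∑ q ∈ T, a p * a q * (b p - b q)^2 = 0 := by
    rw [lagrange_identity]; rw [h]; ring
  have hterm : ∀ p ∈ T, ∀ q ∈ T, 0 ≤ a p * a q * (b p - b q)^2 := fun p hp q hq =>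
    mul_nonneg (mul_nonneg (ha p hp).le (ha q hq).le) (sq_nonneg _)
  have houter := (Finset.sum_eq_zero_iff_of_nonneg
    (fun p hp => Finset.sum_nonneg (fun q hq => hterm p hp q hq))).1 hz p hp
  have hinner := (Finset.sum_eq_zero_iff_of_nonneg (fun q hq => hterm p hp q hq)).1 houter q hq
  have hap := ha p hp; have haq := ha q hq
  have : (b p - b q)^2 = 0 := by
    by_contra hne
    have : 0 < (b p - b q)^2 := lt_of_le_of_ne (sq_nonneg _) (Ne.symm hne)
    nlinarith [mul_pos (mul_pos hap haq) this]
  have := pow_eq_zero_iff (n := 2) (by norm_num) |>.1 this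
  linarith [sub_eq_zero.1 this]

lemma Zfun_smul_Ffun {T : Finset (ℤ × ℤ)} (hT : T.Nonempty) (z : ℝ × ℝ) :
    Zfun T z • Ffun T z = ∑ p ∈ T, Efun p z • latticeEmb p := by
  rw [Ffun, smul_smul, mul_inv_cancel₀ (Zfun_pos hT z).ne', one_smul]

lemma dotp_Ffun {T : Finset (ℤ × ℤ)} (hT : T.Nonempty) (z d : ℝ × ℝ) :
    ∑ p ∈ T, Efun p z * (dotp (latticeEmb p) d - dotp (Ffun T z) d) = 0 := by
  have h := congrArg (fun u => dotp u d) (Zfun_smul_Ffun hT z)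
  simp only [dotp_smul, dotp_sum] at h
  simp only [mul_sub, Finset.sum_sub_distrib, ← Finset.sum_mul, ← h, Zfun]
  ring

lemma Ffun_inj {Θ : Set (ℝ × ℝ)} (hdim : (interior Θ).Nonempty) {T : Finset (ℤ × ℤ)}
    (hT : T.Nonempty) (hhull : Θ ⊆ convexHull ℝ (latticeEmb '' ↑T)) :
    Function.Injective (Ffun T) := by
  intro z1 z2 h
  by_contra hne
  set d := z2 - z1 with hd'
  have hd : d ≠ 0 := sub_ne_zero.2 fun h' => hne h'.symm
  set w := Ffun T z1 with hw
  set c : (ℤ × ℤ) → ℝ := fun p => dotp (latticeEmb p) d - dotp w d with hc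
  have e1 : ∑ p ∈ T, Efun p z1 * c p = 0 := dotp_Ffun hT z1 d
  have e2 : ∑ p ∈ T, Efun p z2 * c p = 0 := by
    have := dotp_Ffun hT z2 d; rwa [← h] at this
  have hEexp : ∀ p, Efun p z2 = Efun p z1 * Real.exp (c p) * Real.exp (dotp w d) := by
    intro p
    have hz2 : z2 = z1 + d := by rw [hd']; ring
    rw [Efun, hz2, dotp_add_right, Real.exp_add, ← Efun]
    rw [hc]; simp only []
    rw [show dotp (latticeEmb p) d = (dotp (latticeEmb p) d - dotp w d) + dotp w d by ring,
      Real.exp_add]; ring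
  have e2' : ∑ p ∈ T, Efun p z1 * Real.exp (c p) * c p = 0 := by
    have : ∑ p ∈ T, Efun p z2 * c p
        = Real.exp (dotp w d) * ∑ p ∈ T, Efun p z1 * Real.exp (c p) * c p := by
      rw [Finset.mul_sum]; exact Finset.sum_congr rfl fun p _ => by rw [hEexp p]; ring
    rw [this] at e2
    exact (mul_eq_zero.1 e2).resolve_left (Real.exp_ne_zero _)
  have e3 : ∑ p ∈ T, Efun p z1 * ((Real.exp (c p) - 1) * c p) = 0 := by
    have : ∀ p ∈ T, Efun p z1 * ((Real.exp (c p) - 1) * c p)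
        = Efun p z1 * Real.exp (c p) * c p - Efun p z1 * c p := fun p _ => by ring
    rw [Finset.sum_congr rfl this, Finset.sum_sub_distrib, e1, e2']; ring
  have hnn : ∀ p ∈ T, 0 ≤ Efun p z1 * ((Real.exp (c p) - 1) * c p) := by
    intro p _
    refine mul_nonneg (Efun_pos p z1).le ?_
    rcases le_or_gt 0 (c p) with hcp | hcp
    · exact mul_nonneg (by linarith [Real.one_le_exp hcp]) hcp
    · have h1 : Real.exp (c p) - 1 ≤ 0 := by linarith [Real.exp_lt_one_iff.2 hcp]
      nlinarith
  have hall : ∀ p ∈ T, c p = 0 := by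
    intro p hp
    have := (Finset.sum_eq_zero_iff_of_nonneg hnn).1 e3 p hp
    rcases mul_eq_zero.1 this with h' | h'
    · exact absurd h' (Efun_pos p z1).ne'
    rcases mul_eq_zero.1 h' with h'' | h''
    · have : Real.exp (c p) = 1 := by linarith
      exact (Real.exp_eq_one_iff _).1 this
    · exact h''
  refine exists_dotp_ne hdim _ hhull hd ⟨dotp w d, ?_⟩
  rintro x ⟨p, hp, rfl⟩
  have := hall p hp
  rw [hc] at this; simp only [] at this; linarith

lemma dlin_apply (p : ℤ × ℤ) (v : ℝ × ℝ) : dlin p v = dotp (latticeEmb p) v := by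
  simp [dlin, dotp]

lemma Efun_hasFDerivAt (p : ℤ × ℤ) (z : ℝ × ℝ) :
    HasFDerivAt (Efun p) (Efun p z • dlin p) z := by
  have h1 : HasFDerivAt (fun z => (dlin p) z) (dlin p) z := (dlin p).hasFDerivAt
  have h2 := h1.exp
  have : (fun z => Real.exp (dlin p z)) = Efun p := by
    funext z; rw [Efun, dlin_apply]
  rwa [this, dlin_apply] at h2

lemma Ffun_smooth (T : Finset (ℤ × ℤ)) (hT : T.Nonempty) : ContDiff ℝ (⊤ : ℕ∞) (Ffun T) := by
  have hE : ∀ p : ℤ × ℤ, ContDiff ℝ (⊤ : ℕ∞) (Efun p) := by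
    intro p
    apply Real.contDiff_exp.comp
    apply ContDiff.add
    · exact contDiff_const.mul contDiff_fst
    · exact contDiff_const.mul contDiff_snd
  have hZ : ContDiff ℝ (⊤ : ℕ∞) (Zfun T) := ContDiff.sum fun p _ => hE p
  exact (hZ.inv fun z => (Zfun_pos hT z).ne').smul
    (ContDiff.sum fun p _ => (hE p).smul contDiff_const)

lemma dotp_add_left (u u' v : ℝ × ℝ) : dotp (u + u') v = dotp u v + dotp u' v := by
  simp [dotp]; ring

lemma Ffun_hasFDerivAt_equiv {Θ : Set (ℝ × ℝ)} (hdim : (interior Θ).Nonempty)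
    {T : Finset (ℤ × ℤ)} (hT : T.Nonempty)
    (hhull : Θ ⊆ convexHull ℝ (latticeEmb '' ↑T)) (z : ℝ × ℝ) :
    ∃ e : (ℝ × ℝ) ≃L[ℝ] (ℝ × ℝ), HasFDerivAt (Ffun T) (e : (ℝ × ℝ) →L[ℝ] (ℝ × ℝ)) z := by
  have hZpos := Zfun_pos hT z
  have hZdef : Zfun T z = ∑ p ∈ T, Efun p z := rfl
  have hZ' : HasFDerivAt (Zfun T) (∑ p ∈ T, Efun p z • dlin p) z :=
    HasFDerivAt.fun_sum fun p _ => Efun_hasFDerivAt p z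
  have hY : HasFDerivAt (fun z => ∑ p ∈ T, Efun p z • latticeEmb p)
      (∑ p ∈ T, (Efun p z • dlin p).smulRight (latticeEmb p)) z :=
    HasFDerivAt.fun_sum fun p _ => (Efun_hasFDerivAt p z).smul_const (latticeEmb p)
  have hinv : HasFDerivAt (fun z => (Zfun T z)⁻¹)
      ((-(Zfun T z ^ 2)⁻¹) • ∑ p ∈ T, Efun p z • dlin p) z :=
    (hasDerivAt_inv hZpos.ne').comp_hasFDerivAt z hZ'
  have hF : HasFDerivAt (Ffun T)
      ((Zfun T z)⁻¹ • (∑ p ∈ T, (Efun p z • dlin p).smulRight (latticeEmb p)) +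
        ((-(Zfun T z ^ 2)⁻¹) • ∑ p ∈ T, Efun p z • dlin p).smulRight
          (∑ p ∈ T, Efun p z • latticeEmb p)) z := hinv.smul hY
  set L := (Zfun T z)⁻¹ • (∑ p ∈ T, (Efun p z • dlin p).smulRight (latticeEmb p)) +
        ((-(Zfun T z ^ 2)⁻¹) • ∑ p ∈ T, Efun p z • dlin p).smulRight
          (∑ p ∈ T, Efun p z • latticeEmb p) with hL
  have hLapply : ∀ v, L v
      = ∑ p ∈ T, ((Zfun T z)⁻¹ * (Efun p z * dotp (latticeEmb p) v)) • latticeEmb p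
        + (-(Zfun T z ^ 2)⁻¹ * ∑ p ∈ T, Efun p z * dotp (latticeEmb p) v) •
            ∑ p ∈ T, Efun p z • latticeEmb p := by
    intro v
    simp only [hL, ContinuousLinearMap.add_apply, ContinuousLinearMap.coe_smul',
      Pi.smul_apply, ContinuousLinearMap.coe_sum', Finset.sum_apply,
      ContinuousLinearMap.smulRight_apply, ContinuousLinearMap.smul_apply, dlin_apply,
      smul_eq_mul, Finset.smul_sum, smul_smul]
    congr 1
    refine Finset.sum_congr rfl fun p _ => ?_
    congr 1
    rw [Finset.mul_sum]
    congr 1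
    exact Finset.sum_congr rfl fun q _ => by ring
  have hinj : Function.Injective L := by
    intro v1 v2 hveq
    rw [← sub_eq_zero, ← map_sub] at hveq
    set v := v1 - v2 with hv'
    suffices h : v = 0 by rwa [hv', sub_eq_zero] at h
    by_contra hvne
    have h1 : dotp (∑ p ∈ T, ((Zfun T z)⁻¹ * (Efun p z * dotp (latticeEmb p) v)) • latticeEmb p) v
        = (Zfun T z)⁻¹ * ∑ p ∈ T, Efun p z * (dotp (latticeEmb p) v)^2 := by
      rw [dotp_sum, Finset.mul_sum]
      exact Finset.sum_congr rfl fun p _ => by rw [dotp_smul]; ring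
    have h2 : dotp (∑ p ∈ T, Efun p z • latticeEmb p) v = ∑ p ∈ T, Efun p z * dotp (latticeEmb p) v := by
      rw [dotp_sum]; exact Finset.sum_congr rfl fun p _ => by rw [dotp_smul]
    have h0 : (Zfun T z)⁻¹ * (∑ p ∈ T, Efun p z * (dotp (latticeEmb p) v)^2)
        + (-(Zfun T z ^ 2)⁻¹ * ∑ p ∈ T, Efun p z * dotp (latticeEmb p) v) *
            (∑ p ∈ T, Efun p z * dotp (latticeEmb p) v) = 0 := by
      have h' := congrArg (fun u => dotp u v) hveq
      simp only [hLapply v] at h'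
      rw [dotp_add_left, dotp_smul, h1, h2] at h'
      simpa [dotp] using h'
    have hkey : (∑ p ∈ T, Efun p z * dotp (latticeEmb p) v)^2
        = (∑ p ∈ T, Efun p z) * (∑ p ∈ T, Efun p z * (dotp (latticeEmb p) v)^2) := by
      rw [← hZdef]
      have hZne : Zfun T z ≠ 0 := hZpos.ne'
      field_simp at h0
      nlinarith [h0]
    have hconst := lagrange_eq T (fun p => Efun p z) (fun p => dotp (latticeEmb p) v)
      (fun p _ => Efun_pos p z) hkey
    obtain ⟨p0, hp0⟩ := hT
    refine exists_dotp_ne hdim _ hhull hvne ⟨dotp (latticeEmb p0) v, ?_⟩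
    rintro x ⟨p, hp, rfl⟩
    exact hconst p hp p0 hp0
  have hker : L.ker = ⊥ := LinearMap.ker_eq_bot.2 hinj
  have hrange : L.range = ⊤ := by
    rw [LinearMap.range_eq_top]
    exact (LinearMap.injective_iff_surjective (f := (L : (ℝ × ℝ) →ₗ[ℝ] (ℝ × ℝ)))).1 hinj
  exact ⟨ContinuousLinearEquiv.ofBijective L hker hrange, by
    rwa [ContinuousLinearEquiv.coe_ofBijective]⟩

lemma Ffun_mem_interior {Θ : Set (ℝ × ℝ)} (hdim : (interior Θ).Nonempty)
    {T : Finset (ℤ × ℤ)} (hT : T.Nonempty)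
    (hΘT : Θ = convexHull ℝ (latticeEmb '' ↑T)) (z : ℝ × ℝ) :
    Ffun T z ∈ interior Θ := by
  have hconv : Convex ℝ Θ := hΘT ▸ convex_convexHull ℝ _
  obtain ⟨z0, hz0⟩ := hdim
  -- weights for z0
  have hz0Θ : z0 ∈ convexHull ℝ (↑(T.image latticeEmb) : Set (ℝ × ℝ)) := by
    rw [Finset.coe_image, ← hΘT]; exact interior_subset hz0
  rw [Finset.convexHull_eq] at hz0Θ
  obtain ⟨w, hw0, hw1, hwc⟩ := hz0Θ
  set s : (ℤ × ℤ) → ℝ := fun p => w (latticeEmb p) with hs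
  have hinj : ∀ p ∈ T, ∀ q ∈ T, latticeEmb p = latticeEmb q → p = q :=
    fun p _ q _ h => latticeEmb_injective h
  have hs0 : ∀ p ∈ T, 0 ≤ s p := fun p hp => hw0 _ (Finset.mem_image_of_mem _ hp)
  have hs1 : ∑ p ∈ T, s p = 1 := by rw [← hw1, Finset.sum_image hinj]
  have hsz0 : ∑ p ∈ T, s p • latticeEmb p = z0 := by
    rw [← hwc, Finset.centerMass_eq_of_sum_1 _ _ hw1, Finset.sum_image hinj]
    simp [hs]
  have hs_le : ∀ p ∈ T, s p ≤ 1 := by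
    intro p hp
    rw [← hs1]
    exact Finset.single_le_sum hs0 hp
  -- weights for x = Ffun T z
  set t : (ℤ × ℤ) → ℝ := fun p => (Zfun T z)⁻¹ * Efun p z with ht
  have hZpos := Zfun_pos hT z
  have ht0 : ∀ p ∈ T, 0 < t p := fun p _ => mul_pos (inv_pos.2 hZpos) (Efun_pos p z)
  have ht1 : ∑ p ∈ T, t p = 1 := by
    rw [ht]; rw [← Finset.mul_sum]
    exact inv_mul_cancel₀ hZpos.ne'
  have hx : Ffun T z = ∑ p ∈ T, t p • latticeEmb p := by
    rw [Ffun, Finset.smul_sum]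
    exact Finset.sum_congr rfl fun p _ => by rw [smul_smul]
  -- choose c
  obtain ⟨pm, hpm, hmin⟩ := Finset.exists_min_image T t hT
  set c : ℝ := min (t pm) 1 / 2 with hc
  have hε : 0 < t pm := ht0 pm hpm
  have hcpos : 0 < c := by
    rw [hc]; have : 0 < min (t pm) 1 := lt_min hε one_pos; linarith
  have hclt1 : c < 1 := by
    rw [hc]; have : min (t pm) 1 ≤ 1 := min_le_right _ _; linarith
  have hct : ∀ p ∈ T, c < t p := by
    intro p hp
    calc c ≤ t pm / 2 := by rw [hc]; gcongr; exact min_le_left _ _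
      _ < t pm := by linarith
      _ ≤ t p := hmin p hp
  -- weights for x'
  set u : (ℤ × ℤ) → ℝ := fun p => (t p - c * s p) / (1 - c) with hu
  have h1c : (0:ℝ) < 1 - c := by linarith
  have hu0 : ∀ p ∈ T, 0 ≤ u p := by
    intro p hp
    apply div_nonneg _ h1c.le
    have := hs_le p hp
    have := hct p hp
    nlinarith [hs0 p hp]
  have hu1 : ∑ p ∈ T, u p = 1 := by
    rw [hu]
    simp only [div_eq_inv_mul, ← Finset.mul_sum]
    rw [Finset.sum_sub_distrib, ht1, ← Finset.mul_sum, hs1]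
    field_simp
  set x' : ℝ × ℝ := ∑ p ∈ T, u p • latticeEmb p with hx'
  have hx'Θ : x' ∈ Θ := by
    rw [hΘT]
    have := Finset.centerMass_mem_convexHull T hu0 (by rw [hu1]; norm_num)
      (fun p hp => Set.mem_image_of_mem latticeEmb (Finset.mem_coe.2 hp))
    rwa [Finset.centerMass_eq_of_sum_1 _ _ hu1] at this
  have hcombo : Ffun T z = c • z0 + (1 - c) • x' := by
    rw [hx, ← hsz0, hx', Finset.smul_sum, Finset.smul_sum, ← Finset.sum_add_distrib]
    refine Finset.sum_congr rfl fun p hp => ?_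
    rw [smul_smul, smul_smul, ← add_smul]
    congr 1
    rw [hu]
    field_simp; ring
  rw [hcombo]
  exact hconv.combo_interior_self_mem_interior hz0 hx'Θ hcpos (by linarith) (by ring)

lemma Ffun_surj_interior {Θ : Set (ℝ × ℝ)} {T : Finset (ℤ × ℤ)} (hT : T.Nonempty)
    (hΘT : Θ = convexHull ℝ (latticeEmb '' ↑T)) {x : ℝ × ℝ} (hx : x ∈ interior Θ) :
    ∃ z : ℝ × ℝ, Ffun T z = x := by
  set G : ℝ × ℝ → ℝ := fun z => ∑ p ∈ T, Real.exp (dotp (latticeEmb p - x) z) with hG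
  obtain ⟨ε, hε, hball⟩ := Metric.isOpen_iff.1 isOpen_interior x hx
  -- lower bound
  have hlb : ∀ z, Real.exp (ε / 2 * ‖z‖) ≤ G z := by
    intro z
    set u : ℝ × ℝ := (if 0 ≤ z.1 then (1:ℝ) else -1, if 0 ≤ z.2 then (1:ℝ) else -1) with hu
    have habs : ∀ t : ℝ, (if 0 ≤ t then (1:ℝ) else -1) * t = |t| := by
      intro t; split_ifs with h
      · rw [abs_of_nonneg h]; ring
      · rw [abs_of_neg (not_le.1 h)]; ring
    have hdotu : dotp u z = |z.1| + |z.2| := by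
      have e : dotp u z
          = (if 0 ≤ z.1 then (1:ℝ) else -1) * z.1 + (if 0 ≤ z.2 then (1:ℝ) else -1) * z.2 := rfl
      rw [e, habs, habs]
    have hnormz : ‖z‖ ≤ dotp u z := by
      rw [hdotu]
      calc ‖z‖ = max |z.1| |z.2| := rfl
        _ ≤ |z.1| + |z.2| :=
          max_le (le_add_of_nonneg_right (abs_nonneg _)) (le_add_of_nonneg_left (abs_nonneg _))
    have hy : x + (ε / 2) • u ∈ Θ := by
      apply interior_subset; apply hball
      simp only [Metric.mem_ball, dist_eq_norm, add_sub_cancel_left, norm_smul,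
        Real.norm_eq_abs, abs_of_pos (by positivity : (0:ℝ) < ε / 2)]
      have hnu : ‖u‖ ≤ 1 := by
        calc ‖u‖ = max |u.1| |u.2| := rfl
          _ ≤ 1 := by
              have e1 : u.1 = if 0 ≤ z.1 then (1:ℝ) else -1 := rfl
              have e2 : u.2 = if 0 ≤ z.2 then (1:ℝ) else -1 := rfl
              rw [e1, e2]; apply max_le <;> split_ifs <;> norm_num
      nlinarith
    obtain ⟨b, hb, hbmax⟩ := Finset.exists_max_image T (fun p => dotp (latticeEmb p) z) hT
    have hhalf : Θ ⊆ {a : ℝ × ℝ | dotp a z ≤ dotp (latticeEmb b) z} := by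
      rw [hΘT]
      apply convexHull_min _ (convex_halfSpace_le (dotp_linear z) _)
      rintro a ⟨p, hp, rfl⟩
      exact hbmax p hp
    have h1 := hhalf hy
    simp only [Set.mem_setOf_eq] at h1
    have h2 : dotp (x + (ε / 2) • u) z = dotp x z + (ε / 2) * dotp u z := by
      rw [dotp_add_left, dotp_smul]
    have h3 : ε / 2 * ‖z‖ ≤ dotp (latticeEmb b - x) z := by
      rw [dotp_sub]
      nlinarith
    calc Real.exp (ε / 2 * ‖z‖) ≤ Real.exp (dotp (latticeEmb b - x) z) := Real.exp_le_exp.2 h3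
      _ ≤ G z := Finset.single_le_sum (f := fun p => Real.exp (dotp (latticeEmb p - x) z))
          (fun p _ => (Real.exp_pos _).le) hb
  -- continuity and coercivity
  have hGcont : Continuous G := by
    apply continuous_finset_sum
    intro p _
    have hc : Continuous fun z : ℝ × ℝ => dotp (latticeEmb p - x) z :=
      (continuous_const.mul continuous_fst).add (continuous_const.mul continuous_snd)
    exact Real.continuous_exp.comp hc
  have hGtends : Tendsto G (cocompact (ℝ × ℝ)) atTop := by
    apply tendsto_atTop_mono hlb
    exact Real.tendsto_exp_atTop.comp (tendsto_norm_cocompact_atTop.const_mul_atTop (by positivity))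
  obtain ⟨z0, hmin⟩ := hGcont.exists_forall_le hGtends
  -- first partial derivative
  have hderiv : ∀ (w : ℝ × ℝ → ℝ),  True := fun _ => trivial
  have hE1 : ∑ p ∈ T, Real.exp (dotp (latticeEmb p - x) z0) * (latticeEmb p - x).1 = 0 := by
    set φ : ℝ → ℝ := fun τ => ∑ p ∈ T, Real.exp (dotp (latticeEmb p - x) z0 + τ * (latticeEmb p - x).1) with hφ
    have hloc : IsLocalMin φ 0 := by
      apply Filter.Eventually.of_forall
      intro τ
      have e0 : φ 0 = G z0 := by
        rw [hφ]; simp [hG]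
      have eτ : φ τ = G (z0 + (τ, 0)) := by
        rw [hφ, hG]
        refine Finset.sum_congr rfl fun p _ => ?_
        congr 1
        simp [dotp]; ring
      rw [e0, eτ]; exact hmin _
    have hder : HasDerivAt φ (∑ p ∈ T, Real.exp (dotp (latticeEmb p - x) z0) * (latticeEmb p - x).1) 0 := by
      have : ∀ p ∈ T, HasDerivAt (fun τ => Real.exp (dotp (latticeEmb p - x) z0 + τ * (latticeEmb p - x).1))
          (Real.exp (dotp (latticeEmb p - x) z0) * (latticeEmb p - x).1) 0 := by
        intro p _
        have h1 : HasDerivAt (fun τ : ℝ => dotp (latticeEmb p - x) z0 + τ * (latticeEmb p - x).1)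
            ((latticeEmb p - x).1) 0 := by
          simpa using (hasDerivAt_mul_const ((latticeEmb p - x).1)).const_add (dotp (latticeEmb p - x) z0)
        have := h1.exp
        simpa using this
      exact HasDerivAt.fun_sum this
    have := hloc.deriv_eq_zero
    rwa [hder.deriv] at this
  have hE2 : ∑ p ∈ T, Real.exp (dotp (latticeEmb p - x) z0) * (latticeEmb p - x).2 = 0 := by
    set φ : ℝ → ℝ := fun τ => ∑ p ∈ T, Real.exp (dotp (latticeEmb p - x) z0 + τ * (latticeEmb p - x).2) with hφ
    have hloc : IsLocalMin φ 0 := by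
      apply Filter.Eventually.of_forall
      intro τ
      have e0 : φ 0 = G z0 := by
        rw [hφ]; simp [hG]
      have eτ : φ τ = G (z0 + (0, τ)) := by
        rw [hφ, hG]
        refine Finset.sum_congr rfl fun p _ => ?_
        congr 1
        simp [dotp]; ring
      rw [e0, eτ]; exact hmin _
    have hder : HasDerivAt φ (∑ p ∈ T, Real.exp (dotp (latticeEmb p - x) z0) * (latticeEmb p - x).2) 0 := by
      have : ∀ p ∈ T, HasDerivAt (fun τ => Real.exp (dotp (latticeEmb p - x) z0 + τ * (latticeEmb p - x).2))
          (Real.exp (dotp (latticeEmb p - x) z0) * (latticeEmb p - x).2) 0 := by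
        intro p _
        have h1 : HasDerivAt (fun τ : ℝ => dotp (latticeEmb p - x) z0 + τ * (latticeEmb p - x).2)
            ((latticeEmb p - x).2) 0 := by
          simpa using (hasDerivAt_mul_const ((latticeEmb p - x).2)).const_add (dotp (latticeEmb p - x) z0)
        have := h1.exp
        simpa using this
      exact HasDerivAt.fun_sum this
    have := hloc.deriv_eq_zero
    rwa [hder.deriv] at this
  -- conclude
  refine ⟨z0, ?_⟩
  have hEκ : ∀ p, Efun p z0 = Real.exp (dotp (latticeEmb p - x) z0) * Real.exp (dotp x z0) := by
    intro p
    rw [Efun, ← Real.exp_add]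
    congr 1
    simp [dotp]; ring
  have hsum : ∑ p ∈ T, Efun p z0 • latticeEmb p = Zfun T z0 • x := by
    have c1 : (∑ p ∈ T, Efun p z0 • latticeEmb p).1 = (Zfun T z0 • x).1 := by
      simp only [Prod.fst_sum, Prod.smul_fst, smul_eq_mul, Zfun, Finset.sum_mul]
      rw [← sub_eq_zero, ← Finset.sum_sub_distrib]
      have : ∀ p ∈ T, Efun p z0 * (latticeEmb p).1 - Efun p z0 * x.1
          = Real.exp (dotp x z0) * (Real.exp (dotp (latticeEmb p - x) z0) * (latticeEmb p - x).1) := by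
        intro p _
        rw [hEκ p]
        have : (latticeEmb p - x).1 = (latticeEmb p).1 - x.1 := rfl
        rw [this]; ring
      rw [Finset.sum_congr rfl this, ← Finset.mul_sum, hE1, mul_zero]
    have c2 : (∑ p ∈ T, Efun p z0 • latticeEmb p).2 = (Zfun T z0 • x).2 := by
      simp only [Prod.snd_sum, Prod.smul_snd, smul_eq_mul, Zfun, Finset.sum_mul]
      rw [← sub_eq_zero, ← Finset.sum_sub_distrib]
      have : ∀ p ∈ T, Efun p z0 * (latticeEmb p).2 - Efun p z0 * x.2
          = Real.exp (dotp x z0) * (Real.exp (dotp (latticeEmb p - x) z0) * (latticeEmb p - x).2) := by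
        intro p _
        rw [hEκ p]
        have : (latticeEmb p - x).2 = (latticeEmb p).2 - x.2 := rfl
        rw [this]; ring
      rw [Finset.sum_congr rfl this, ← Finset.mul_sum, hE2, mul_zero]
    exact Prod.ext c1 c2
  rw [Ffun, hsum, smul_smul, inv_mul_cancel₀ (Zfun_pos hT z0).ne', one_smul]

/-- The moment map associated to a (bounded) region `Θ`, given by the weighted average of the
lattice points of `Θ` with weights `x^i y^j`. -/
def momentMap (Θ : Set (ℝ × ℝ)) (q : ℝ × ℝ) : ℝ × ℝ :=
  (∑ᶠ (p : ℤ × ℤ) (_ : latticeEmb p ∈ Θ), q.1 ^ p.1 * q.2 ^ p.2)⁻¹ •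
    ∑ᶠ (p : ℤ × ℤ) (_ : latticeEmb p ∈ Θ), (q.1 ^ p.1 * q.2 ^ p.2) • latticeEmb p

/-- for a lattice polygon `Θ ⊆ ℝ²_{≥0}` with nonempty interior, the moment map
restricted to the open positive quadrant is a `C^∞` diffeomorphism onto the interior of `Θ`:
it is injective, smooth, its image is exactly `int Θ`, and its inverse is smooth. -/
theorem momentMap_is_diffeomorphism_onto_interior
    (S : Finset (ℤ × ℤ)) (hS : ∀ p ∈ S, 0 ≤ p.1 ∧ 0 ≤ p.2)
    (Θ : Set (ℝ × ℝ)) (hΘ : Θ = convexHull ℝ (latticeEmb '' (S : Set (ℤ × ℤ))))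
    (hdim : (interior Θ).Nonempty) :
    Set.InjOn (momentMap Θ) posQuad ∧
    ContDiffOn ℝ (⊤ : ℕ∞) (momentMap Θ) posQuad ∧
    momentMap Θ '' posQuad = interior Θ ∧
    ∃ ψ : ℝ × ℝ → ℝ × ℝ,
      ContDiffOn ℝ (⊤ : ℕ∞) ψ (interior Θ) ∧
      (∀ q ∈ posQuad, ψ (momentMap Θ q) = q) ∧
      (∀ p ∈ interior Θ, ψ p ∈ posQuad ∧ momentMap Θ (ψ p) = p) := by
  -- S is nonempty
  have hSne : S.Nonempty := by
    by_contra h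
    rw [Finset.not_nonempty_iff_eq_empty] at h
    rw [h] at hΘ
    simp only [Finset.coe_empty, Set.image_empty, convexHull_empty] at hΘ
    rw [hΘ] at hdim
    simp at hdim
  -- the set of lattice points in Θ is finite
  have hfin : {p : ℤ × ℤ | latticeEmb p ∈ Θ}.Finite := by
    have hcomp : IsCompact Θ := by
      rw [hΘ]; exact Set.Finite.isCompact_convexHull (𝕜 := ℝ) ((S.finite_toSet).image latticeEmb)
    obtain ⟨R, hR⟩ := hcomp.isBounded.subset_closedBall 0
    apply Set.Finite.subset (Set.finite_Icc ((⌈-R⌉ : ℤ), (⌈-R⌉ : ℤ)) ((⌊R⌋ : ℤ), (⌊R⌋ : ℤ)))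
    intro p hp
    have h1 : ‖latticeEmb p‖ ≤ R := by
      have := hR hp
      simpa [dist_eq_norm] using mem_closedBall_zero_iff.1 this
    have hf1 : |(p.1 : ℝ)| ≤ R := le_trans (norm_fst_le (latticeEmb p)) h1
    have hf2 : |(p.2 : ℝ)| ≤ R := le_trans (norm_snd_le (latticeEmb p)) h1
    rw [abs_le] at hf1 hf2
    refine Set.mem_Icc.2 ⟨Prod.mk_le_mk.2 ⟨?_, ?_⟩, Prod.mk_le_mk.2 ⟨?_, ?_⟩⟩
    · exact Int.ceil_le.2 (by exact_mod_cast hf1.1)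
    · exact Int.ceil_le.2 (by exact_mod_cast hf2.1)
    · exact Int.le_floor.2 (by exact_mod_cast hf1.2)
    · exact Int.le_floor.2 (by exact_mod_cast hf2.2)
  set T : Finset (ℤ × ℤ) := hfin.toFinset with hTdef
  have hmem : ∀ p : ℤ × ℤ, p ∈ T ↔ latticeEmb p ∈ Θ := fun p => hfin.mem_toFinset
  have hST : S ⊆ T := by
    intro p hp
    rw [hmem]
    rw [hΘ]
    exact subset_convexHull ℝ _ (Set.mem_image_of_mem _ (Finset.mem_coe.2 hp))
  have hTne : T.Nonempty := hSne.mono hST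
  have hΘT : Θ = convexHull ℝ (latticeEmb '' ↑T) := by
    apply le_antisymm
    · rw [hΘ]
      exact convexHull_mono (Set.image_mono (by exact_mod_cast hST))
    · apply convexHull_min
      · rintro x ⟨p, hp, rfl⟩
        exact (hmem p).1 (Finset.mem_coe.1 hp)
      · rw [hΘ]; exact convex_convexHull ℝ _
  have hhull : Θ ⊆ convexHull ℝ (latticeEmb '' ↑T) := le_of_eq hΘT
  -- rewrite momentMap as a finite sum
  have hfs : ∀ {M : Type} [AddCommMonoid M] (f : (ℤ × ℤ) → M),
      (∑ᶠ (p : ℤ × ℤ) (_ : latticeEmb p ∈ Θ), f p) = ∑ p ∈ T, f p := by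
    intro M _ f
    have h1 : (∑ᶠ (p : ℤ × ℤ) (_ : latticeEmb p ∈ Θ), f p)
        = ∑ᶠ p ∈ {p : ℤ × ℤ | latticeEmb p ∈ Θ}, f p := rfl
    have h2 : {p : ℤ × ℤ | latticeEmb p ∈ Θ} = (↑T : Set (ℤ × ℤ)) := by
      ext p; rw [Set.mem_setOf_eq, Finset.mem_coe, hmem]
    rw [h1, h2, finsum_mem_coe_finset]
  have hmomentT : ∀ q : ℝ × ℝ, momentMap Θ q
      = (∑ p ∈ T, q.1 ^ p.1 * q.2 ^ p.2)⁻¹ • ∑ p ∈ T, (q.1 ^ p.1 * q.2 ^ p.2) • latticeEmb p := by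
    intro q
    rw [momentMap, hfs, hfs]
  -- momentMap in exponential coordinates
  have hterm : ∀ (p : ℤ × ℤ) (z : ℝ × ℝ),
      (Real.exp z.1) ^ p.1 * (Real.exp z.2) ^ p.2 = Efun p z := by
    intro p z
    rw [zpow_eq_exp_log (Real.exp_pos _), zpow_eq_exp_log (Real.exp_pos _),
      Real.log_exp, Real.log_exp, ← Real.exp_add, Efun]
    rfl
  have hmm : ∀ z : ℝ × ℝ, momentMap Θ (Real.exp z.1, Real.exp z.2) = Ffun T z := by
    intro z
    rw [hmomentT, Ffun]
    congr 1
    · rw [Zfun]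
      congr 1
      exact Finset.sum_congr rfl fun p _ => hterm p z
    · exact Finset.sum_congr rfl fun p _ => by rw [hterm p z]
  have hq : ∀ q ∈ posQuad, momentMap Θ q = Ffun T (Real.log q.1, Real.log q.2) := by
    rintro q ⟨hq1, hq2⟩
    have := hmm (Real.log q.1, Real.log q.2)
    simp only [Real.exp_log hq1, Real.exp_log hq2] at this
    rw [← this]
  have hopen : IsOpen posQuad := by
    have he : posQuad = {q : ℝ × ℝ | 0 < q.1} ∩ {q : ℝ × ℝ | 0 < q.2} := rfl
    rw [he]
    exact (isOpen_lt continuous_const continuous_fst).inter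
      (isOpen_lt continuous_const continuous_snd)
  have Finj : Function.Injective (Ffun T) := Ffun_inj hdim hTne hhull
  -- ψ
  set σ : ℝ × ℝ → ℝ × ℝ := Function.invFun (Ffun T) with hσdef
  have hlinv : Function.LeftInverse σ (Ffun T) := Function.leftInverse_invFun Finj
  refine ⟨?_, ?_, ?_, ?_⟩
  · -- injectivity
    intro q1 hq1 q2 hq2 heq
    rw [hq q1 hq1, hq q2 hq2] at heq
    have := Finj heq
    have e1 := congrArg Prod.fst this
    have e2 := congrArg Prod.snd this
    simp only at e1 e2
    have : q1.1 = q2.1 := by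
      rw [← Real.exp_log hq1.1, ← Real.exp_log hq2.1, e1]
    have h2 : q1.2 = q2.2 := by
      rw [← Real.exp_log hq1.2, ← Real.exp_log hq2.2, e2]
    exact Prod.ext this h2
  · -- smoothness
    intro q hqm
    have hlq : ContDiffAt ℝ (⊤ : ℕ∞) (fun q : ℝ × ℝ => (Real.log q.1, Real.log q.2)) q := by
      refine ContDiffAt.prodMk ?_ ?_
      · exact (Real.contDiffAt_log.2 hqm.1.ne').comp q contDiff_fst.contDiffAt
      · exact (Real.contDiffAt_log.2 hqm.2.ne').comp q contDiff_snd.contDiffAt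
    have hcomp : ContDiffAt ℝ (⊤ : ℕ∞) (fun q : ℝ × ℝ => Ffun T (Real.log q.1, Real.log q.2)) q :=
      ((Ffun_smooth T hTne).contDiffAt).comp q hlq
    have hev : momentMap Θ =ᶠ[nhds q] fun q : ℝ × ℝ => Ffun T (Real.log q.1, Real.log q.2) :=
      Filter.eventuallyEq_of_mem (hopen.mem_nhds hqm) fun q' hq' => hq q' hq'
    exact (hcomp.congr_of_eventuallyEq hev).contDiffWithinAt
  · -- image
    apply le_antisymm
    · rintro x ⟨q, hqm, rfl⟩
      rw [hq q hqm]
      exact Ffun_mem_interior hdim hTne hΘT _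
    · intro x hx
      obtain ⟨z, hz⟩ := Ffun_surj_interior hTne hΘT hx
      exact ⟨(Real.exp z.1, Real.exp z.2), ⟨Real.exp_pos _, Real.exp_pos _⟩, by rw [hmm z, hz]⟩
  · -- inverse
    refine ⟨fun w => (Real.exp ((σ w).1), Real.exp ((σ w).2)), ?_, ?_, ?_⟩
    · -- smoothness of the inverse
      intro w hw
      obtain ⟨z, hz⟩ := Ffun_surj_interior hTne hΘT hw
      obtain ⟨e, hFe⟩ := Ffun_hasFDerivAt_equiv hdim hTne hhull z
      have hCD : ContDiffAt ℝ (⊤ : ℕ∞) (Ffun T) z := (Ffun_smooth T hTne).contDiffAt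
      have hstrict : HasStrictFDerivAt (Ffun T) (e : (ℝ × ℝ) →L[ℝ] (ℝ × ℝ)) z :=
        hCD.hasStrictFDerivAt' hFe (by simp)
      have hg : ContDiffAt ℝ (⊤ : ℕ∞) (hstrict.localInverse (Ffun T) e z) (Ffun T z) :=
        hCD.to_localInverse hFe (by simp)
      have heq : σ =ᶠ[nhds (Ffun T z)] hstrict.localInverse (Ffun T) e z := by
        filter_upwards [hstrict.eventually_right_inverse] with y hy
        calc σ y = σ (Ffun T (hstrict.localInverse (Ffun T) e z y)) := by rw [hy]
          _ = hstrict.localInverse (Ffun T) e z y := hlinv _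
      have hσCD : ContDiffAt ℝ (⊤ : ℕ∞) σ w := by
        rw [← hz]
        exact hg.congr_of_eventuallyEq heq
      have : ContDiffAt ℝ (⊤ : ℕ∞) (fun w => (Real.exp ((σ w).1), Real.exp ((σ w).2))) w := by
        refine ContDiffAt.prodMk ?_ ?_
        · exact Real.contDiff_exp.contDiffAt.comp w (contDiff_fst.contDiffAt.comp w hσCD)
        · exact Real.contDiff_exp.contDiffAt.comp w (contDiff_snd.contDiffAt.comp w hσCD)
      exact this.contDiffWithinAt
    · -- left inverse on posQuad
      intro q hqm
      have h1 := hlinv (Real.log q.1, Real.log q.2)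
      rw [hq q hqm]
      simp only [h1]
      exact Prod.ext (Real.exp_log hqm.1) (Real.exp_log hqm.2)
    · -- right inverse on the interior
      intro w hw
      obtain ⟨z, hz⟩ := Ffun_surj_interior hTne hΘT hw
      have hFw : Ffun T (σ w) = w := Function.invFun_eq ⟨z, hz⟩
      refine ⟨⟨Real.exp_pos _, Real.exp_pos _⟩, ?_⟩
      have := hmm ((σ w).1, (σ w).2)
      simp only at this
      rw [this]
      rw [show ((σ w).1, (σ w).2) = σ w from rfl]
      exact hFw

end
end

section
/- Let Θ ⊂ ℝ²_{≥0} be a lattice polygon with nonempty interior. The symmetric extension φ̃_Θ of the moment map is well defined on (ℝ*)² and is a homeomorphism of (ℝ*)² onto the union ⋃_{ρ∈S} ρ(int Θ); moreover the four sets ρ(int Θ), ρ ∈ S, are pairwise disjoint (in particular int Θ ⊂ ℝ²_{>0}). -/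
noncomputable section

/-- The real torus (ℝ*)². -/
def realTorus : Set (ℝ × ℝ) := {q : ℝ × ℝ | q.1 ≠ 0 ∧ q.2 ≠ 0}

/-- The orthogonal reflection ρ_{i,j} with respect to the coordinate axes. -/
def quadRefl (s : Bool × Bool) (q : ℝ × ℝ) : ℝ × ℝ :=
  ((if s.1 then -q.1 else q.1), (if s.2 then -q.2 else q.2))

/-- Ã : the union of the four reflected copies of A. -/
def tildeSet (A : Set (ℝ × ℝ)) : Set (ℝ × ℝ) := ⋃ s : Bool × Bool, quadRefl s '' A

/-- The symmetric extension φ̃_Θ of the moment map to (ℝ*)². -/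
def tildeMomentMap (Θ : Set (ℝ × ℝ)) (q : ℝ × ℝ) : ℝ × ℝ :=
  (Real.sign q.1 * (momentMap Θ (|q.1|, |q.2|)).1,
   Real.sign q.2 * (momentMap Θ (|q.1|, |q.2|)).2)

/-! In logarithmic coordinates the moment map becomes the Gibbs mean
`u ↦ ∑ₜ exp (u t) • t / ∑ₜ exp (u t)` of the lattice points `T` of `Θ`, where `u` is a linear form;
it is the gradient of the log-partition function `G u = log ∑ₜ exp (u t)`. Its values are convex
combinations of `T` with positive weights, hence lie in `int Θ`. Along a line the derivative of `G`
is an exponentially tilted mean whose derivative is a variance, positive since `T` does not lie on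
a line; so the Gibbs mean is injective. For `y ∈ int Θ` we have `G u - u y ≥ ε ‖u‖`, so this
function has a minimum, where the Gibbs mean equals `y`; the same bound makes preimages of small
closed balls compact, which gives continuity of the inverse. Reflections in the axes transport the
resulting homeomorphism `ℝ²_{>0} ≅ int Θ` to the four open quadrants. -/

open Real Set Filter Topology Function

theorem sq_sum_mul_lt_sum_mul_sq_mul_sum {ι : Type*} {s : Finset ι} {a β : ι → ℝ}
    (ha : ∀ i ∈ s, 0 < a i) (hβ : ∃ i ∈ s, ∃ j ∈ s, β i ≠ β j) :
    (∑ i ∈ s, a i * β i) ^ 2 < (∑ i ∈ s, a i * β i ^ 2) * ∑ i ∈ s, a i := by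
  obtain ⟨p, hp, q, hq, hpq⟩ := hβ
  have lagrange : ∑ i ∈ s, ∑ j ∈ s, a i * a j * (β i - β j) ^ 2 =
      2 * ((∑ i ∈ s, a i * β i ^ 2) * ∑ i ∈ s, a i - (∑ i ∈ s, a i * β i) ^ 2) := by
    have expand : ∀ i j, a i * a j * (β i - β j) ^ 2 = a i * β i ^ 2 * a j +
        a i * (a j * β j ^ 2) - 2 * (a i * β i) * (a j * β j) := fun i j => by ring
    simp only [expand, Finset.sum_add_distrib, Finset.sum_sub_distrib, ← Finset.mul_sum,
      ← Finset.sum_mul]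
    ring
  have hpos : 0 < ∑ i ∈ s, ∑ j ∈ s, a i * a j * (β i - β j) ^ 2 := by
    refine Finset.sum_pos' (fun i hi => Finset.sum_nonneg fun j hj => ?_) ⟨p, hp, ?_⟩
    · have := ha i hi; have := ha j hj; positivity
    · refine Finset.sum_pos' (fun j hj => ?_) ⟨q, hq, ?_⟩
      · have := ha p hp; have := ha j hj; positivity
      · have := ha p hp; have := ha q hq; have := sub_ne_zero.2 hpq; positivity
  linarith

theorem strictMono_expWeightedMean {ι : Type*} {s : Finset ι} (α β : ι → ℝ)
    (hβ : ∃ i ∈ s, ∃ j ∈ s, β i ≠ β j) :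
    StrictMono fun x : ℝ =>
      (∑ i ∈ s, exp (α i + x * β i) * β i) / ∑ i ∈ s, exp (α i + x * β i) := by
  refine strictMono_of_deriv_pos fun x => ?_
  set a : ι → ℝ := fun i => exp (α i + x * β i)
  have hexp : ∀ i, HasDerivAt (fun x => exp (α i + x * β i)) (a i * β i) x := fun i => by
    simpa using ((hasDerivAt_mul_const (β i)).const_add (α i)).exp
  have hden : HasDerivAt (fun x => ∑ i ∈ s, exp (α i + x * β i)) (∑ i ∈ s, a i * β i) x :=
    HasDerivAt.fun_sum fun i _ => hexp i
  have hnum : HasDerivAt (fun x => ∑ i ∈ s, exp (α i + x * β i) * β i)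
      (∑ i ∈ s, a i * β i ^ 2) x :=
    HasDerivAt.fun_sum fun i _ => by simpa [sq, mul_assoc] using (hexp i).mul_const (β i)
  have hpos : 0 < ∑ i ∈ s, a i :=
    Finset.sum_pos (fun i _ => exp_pos _) (let ⟨p, hp, _⟩ := hβ; ⟨p, hp⟩)
  rw [(hnum.fun_div hden hpos.ne').deriv]
  have := sq_sum_mul_lt_sum_mul_sq_mul_sum (fun i _ => exp_pos (α i + x * β i)) hβ
  apply div_pos _ (by positivity)
  nlinarith

theorem sum_smul_mem_interior_convexHull {E : Type*} [AddCommGroup E] [Module ℝ E]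
    [TopologicalSpace E] [IsTopologicalAddGroup E] [ContinuousSMul ℝ E] {s : Finset E}
    (hs : (interior (convexHull ℝ (s : Set E))).Nonempty) {w : E → ℝ}
    (hw₀ : ∀ x ∈ s, 0 < w x) (hw₁ : ∑ x ∈ s, w x = 1) :
    ∑ x ∈ s, w x • x ∈ interior (convexHull ℝ (s : Set E)) := by
  obtain ⟨z, hz⟩ := hs
  obtain ⟨μ, hμ₀, hμ₁, rfl⟩ := Finset.mem_convexHull'.1 (interior_subset hz)
  have hne : s.Nonempty := Finset.nonempty_of_sum_ne_zero (hw₁.trans_ne one_ne_zero)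
  -- `w = l μ + (1 - l) w'` with `0 < l < 1`, `w' ≥ 0` and `μ` the weights of the interior point
  set m := s.inf' hne w
  have hm : 0 < m := (Finset.lt_inf'_iff hne).2 hw₀
  set l := m / (1 + m)
  have hl₀ : 0 < l := by positivity
  have hl₁ : l < 1 := (div_lt_one (by positivity)).2 (by linarith)
  have hlw : ∀ x ∈ s, l * μ x ≤ w x := fun x hx =>
    calc l * μ x ≤ m * 1 := mul_le_mul (div_le_self hm.le (by linarith))
            ((Finset.single_le_sum hμ₀ hx).trans_eq hμ₁) (hμ₀ x hx) hm.le
      _ ≤ w x := (mul_one m).trans_le (Finset.inf'_le w hx)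
  set w' : E → ℝ := fun x => (w x - l * μ x) / (1 - l)
  have hw' : ∑ x ∈ s, w' x • x ∈ convexHull ℝ (s : Set E) := by
    refine (convex_convexHull ℝ _).sum_mem (fun x hx => div_nonneg (sub_nonneg.2 (hlw x hx))
      (by linarith)) ?_ fun x hx => subset_convexHull ℝ _ hx
    rw [← Finset.sum_div, Finset.sum_sub_distrib, ← Finset.mul_sum, hw₁, hμ₁, mul_one,
      div_self (by linarith)]
  have hsplit : ∑ x ∈ s, w x • x = l • ∑ x ∈ s, μ x • x + (1 - l) • ∑ x ∈ s, w' x • x := by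
    simp only [Finset.smul_sum, smul_smul, ← Finset.sum_add_distrib, ← add_smul]
    refine Finset.sum_congr rfl fun x _ => ?_
    congr 1
    have : (1 - l) * w' x = w x - l * μ x := mul_div_cancel₀ _ (by linarith)
    linarith
  rw [hsplit]
  exact (convex_convexHull ℝ _).combo_interior_closure_mem_interior hz (subset_closure hw')
    hl₀ (by linarith) (by ring)

theorem continuousOn_invFun_of_isCompact_preimage {X Y : Type*} [TopologicalSpace X] [Nonempty X]
    [TopologicalSpace Y] [T2Space Y] {f : X → Y} (hf : Continuous f) (hinj : Injective f)
    {U : Set Y} (hU : U ⊆ range f) (hproper : ∀ y ∈ U, ∃ N ∈ 𝓝 y, IsCompact (f ⁻¹' N)) :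
    ContinuousOn (invFun f) U := by
  intro y hy
  obtain ⟨N, hN, hcpt⟩ := hproper y hy
  have hright : f ∘ invFun f =ᶠ[𝓝[U] y] id :=
    eventually_nhdsWithin_of_forall fun z hz => invFun_eq (hU hz)
  refine hcpt.tendsto_nhds_of_unique_mapClusterPt ?_ fun x _ hx => ?_
  · filter_upwards [nhdsWithin_le_nhds hN, hright] with z hz hfz
    rw [mem_preimage, show f (invFun f z) = z from hfz]
    exact hz
  · -- `f x` is a cluster point of `f ∘ invFun f = id` along `𝓝[U] y`, hence equals `y`.
    have hclus := (hright.mapClusterPt_iff.1 (hx.continuousAt_comp hf.continuousAt))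
    have hfx : f x = y := eq_of_nhds_neBot
      ((mapClusterPt_id_iff.1 hclus).mono nhdsWithin_le_nhds).neBot
    exact hinj (hfx.trans (invFun_eq (hU hy)).symm)

section LogPartition

variable {E : Type*} [NormedAddCommGroup E] [NormedSpace ℝ E] (T : Finset E)

def partitionFn (u : StrongDual ℝ E) : ℝ := ∑ t ∈ T, exp (u t)

def logPartitionFn (u : StrongDual ℝ E) : ℝ := log (partitionFn T u)

def gibbsMean (u : StrongDual ℝ E) : E := (partitionFn T u)⁻¹ • ∑ t ∈ T, exp (u t) • t

variable {T}

theorem partitionFn_pos (hT : T.Nonempty) (u : StrongDual ℝ E) : 0 < partitionFn T u :=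
  Finset.sum_pos (fun _ _ => exp_pos _) hT

theorem continuous_partitionFn : Continuous (partitionFn T) :=
  continuous_finsetSum _ fun t _ => (continuous_eval_const t).rexp

theorem continuous_logPartitionFn (hT : T.Nonempty) : Continuous (logPartitionFn T) :=
  continuous_partitionFn.log fun u => (partitionFn_pos hT u).ne'

theorem continuous_gibbsMean (hT : T.Nonempty) : Continuous (gibbsMean T) :=
  (continuous_partitionFn.inv₀ fun u => (partitionFn_pos hT u).ne').smul <|
    continuous_finsetSum _ fun t _ => (continuous_eval_const t).rexp.smul continuous_const

theorem gibbsMean_eq_sum (u : StrongDual ℝ E) :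
    gibbsMean T u = ∑ t ∈ T, (exp (u t) / partitionFn T u) • t := by
  simp only [gibbsMean, Finset.smul_sum, smul_smul, div_eq_inv_mul]

theorem apply_gibbsMean (u v : StrongDual ℝ E) :
    v (gibbsMean T u) = (∑ t ∈ T, exp (u t) * v t) / partitionFn T u := by
  simp [gibbsMean, map_sum, div_eq_inv_mul]

theorem hasFDerivAt_logPartitionFn (hT : T.Nonempty) (u : StrongDual ℝ E) :
    HasFDerivAt (logPartitionFn T) (ContinuousLinearMap.apply ℝ ℝ (gibbsMean T u)) u := by
  have h : HasFDerivAt (partitionFn T) (∑ t ∈ T, exp (u t) • ContinuousLinearMap.apply ℝ ℝ t) u :=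
    HasFDerivAt.fun_sum fun t _ => (ContinuousLinearMap.apply ℝ ℝ t).hasFDerivAt.exp
  refine (h.log (partitionFn_pos hT u).ne').congr_fderiv ?_
  simp only [gibbsMean, map_smul, map_sum]

theorem gibbsMean_mem_interior_convexHull (hT : (interior (convexHull ℝ (T : Set E))).Nonempty)
    (u : StrongDual ℝ E) : gibbsMean T u ∈ interior (convexHull ℝ (T : Set E)) := by
  have hne : T.Nonempty := by simpa using hT.mono interior_subset
  rw [gibbsMean_eq_sum]
  refine sum_smul_mem_interior_convexHull hT (fun t _ => div_pos (exp_pos _)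
    (partitionFn_pos hne u)) ?_
  rw [← Finset.sum_div]
  exact div_self (partitionFn_pos hne u).ne'

theorem hasDerivAt_logPartitionFn_add_smul (hT : T.Nonempty) (b v : StrongDual ℝ E) (x : ℝ) :
    HasDerivAt (fun x : ℝ => logPartitionFn T (b + x • v)) (v (gibbsMean T (b + x • v))) x := by
  have hline : HasDerivAt (fun x : ℝ => b + x • v) v x := by
    simpa using ((hasDerivAt_id x).smul_const v).const_add b
  exact (hasFDerivAt_logPartitionFn hT (b + x • v)).comp_hasDerivAt x hline

theorem strictMono_apply_gibbsMean_add_smul (b : StrongDual ℝ E) {v : StrongDual ℝ E}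
    (hv : ∃ p ∈ T, ∃ q ∈ T, v p ≠ v q) :
    StrictMono fun x : ℝ => v (gibbsMean T (b + x • v)) := by
  convert strictMono_expWeightedMean (fun t => b t) (fun t => v t) hv using 2 with x
  simp [apply_gibbsMean, partitionFn, mul_comm]

theorem exists_apply_ne_of_interior_nonempty
    (hT : (interior (convexHull ℝ (T : Set E))).Nonempty) {v : StrongDual ℝ E} (hv : v ≠ 0) :
    ∃ p ∈ T, ∃ q ∈ T, v p ≠ v q := by
  by_contra! hconst
  obtain ⟨p, hp⟩ : T.Nonempty := by simpa using hT.mono interior_subset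
  obtain ⟨z, hz⟩ := hT
  have hlevel : convexHull ℝ (T : Set E) ⊆ v ⁻¹' {v p} :=
    convexHull_min (fun q hq => hconst q hq p hp)
      ((convex_singleton _).linear_preimage v.toLinearMap)
  obtain ⟨x, hx⟩ : ∃ x, v x ≠ 0 := by
    by_contra! h
    exact hv (ContinuousLinearMap.ext h)
  have hline : ∀ᶠ δ : ℝ in 𝓝 0, z + δ • x ∈ convexHull ℝ (T : Set E) :=
    ((continuous_const.add (continuous_id.smul continuous_const)).tendsto' 0 z
      (by simp)).eventually (mem_interior_iff_mem_nhds.1 hz)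
  obtain ⟨δ, hδ, hδmem⟩ := hline.exists_gt
  have h₁ := hlevel hδmem
  have h₂ := hlevel (interior_subset hz)
  simp only [mem_preimage, mem_singleton_iff, map_add, map_smul, smul_eq_mul] at h₁ h₂
  have hδx : δ * v x = 0 := by linarith
  exact hx ((mul_eq_zero.1 hδx).resolve_left hδ.ne')

theorem gibbsMean_injective (hT : (interior (convexHull ℝ (T : Set E))).Nonempty) :
    Injective (gibbsMean T) := by
  intro u w h
  by_contra hne
  have hlt := strictMono_apply_gibbsMean_add_smul w
    (exists_apply_ne_of_interior_nonempty hT (sub_ne_zero.2 hne)) zero_lt_one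
  simp [h] at hlt

theorem apply_le_logPartitionFn {y : E} (hy : y ∈ convexHull ℝ (T : Set E))
    (u : StrongDual ℝ E) : u y ≤ logPartitionFn T u := by
  refine convexHull_min (fun t ht => ?_) ((convex_Iic _).linear_preimage u.toLinearMap) hy
  calc u t = log (exp (u t)) := (log_exp _).symm
    _ ≤ logPartitionFn T u := log_le_log (exp_pos _)
      (Finset.single_le_sum (fun _ _ => (exp_pos _).le) (Finset.mem_coe.1 ht))

theorem mul_norm_le_logPartitionFn_sub {y : E} {ε : ℝ} (hε : 0 < ε)
    (hy : Metric.closedBall y ε ⊆ convexHull ℝ (T : Set E)) (u : StrongDual ℝ E) :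
    ε * ‖u‖ ≤ logPartitionFn T u - u y := by
  rw [← le_div_iff₀' hε]
  have hbound : ∀ x, ‖x‖ = 1 → ε * u x ≤ logPartitionFn T u - u y := by
    intro x hx
    have hmem : y + ε • x ∈ Metric.closedBall y ε := by simp [norm_smul, hx, abs_of_pos hε]
    have := apply_le_logPartitionFn (hy hmem) u
    simp only [map_add, map_smul, smul_eq_mul] at this
    linarith
  refine ContinuousLinearMap.opNorm_le_of_unit_norm (div_nonneg ?_ hε.le) fun x hx => ?_
  · have := apply_le_logPartitionFn (hy (Metric.mem_closedBall_self hε.le)) u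
    linarith
  · rw [Real.norm_eq_abs, le_div_iff₀' hε]
    rcases abs_cases (u x) with ⟨h, _⟩ | ⟨h, _⟩
    · rw [h]
      exact hbound x hx
    · rw [h, ← map_neg]
      exact hbound (-x) (by rwa [norm_neg])

theorem logPartitionFn_sub_apply_gibbsMean_le
    (hT : (interior (convexHull ℝ (T : Set E))).Nonempty) (u : StrongDual ℝ E) :
    logPartitionFn T u - u (gibbsMean T u) ≤ logPartitionFn T 0 := by
  have hne : T.Nonempty := by simpa using hT.mono interior_subset
  rcases eq_or_ne u 0 with rfl | hu
  · simp
  obtain ⟨c, hc, hslope⟩ := exists_hasDerivAt_eq_slope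
    (fun x : ℝ => logPartitionFn T (u + x • -u)) _ zero_lt_one
    ((continuous_logPartitionFn hne).comp (by fun_prop)).continuousOn
    fun x _ => hasDerivAt_logPartitionFn_add_smul hne u (-u) x
  have hmono := strictMono_apply_gibbsMean_add_smul u
    (exists_apply_ne_of_interior_nonempty hT (neg_ne_zero.2 hu)) hc.1
  simp only [zero_smul, add_zero, one_smul, add_neg_cancel, sub_zero, div_one] at hslope hmono
  rw [hslope] at hmono
  simp only [neg_apply] at hmono
  linarith

theorem exists_gibbsMean_eq [FiniteDimensional ℝ E] {y : E}
    (hy : y ∈ interior (convexHull ℝ (T : Set E))) : ∃ u, gibbsMean T u = y := by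
  have hne : T.Nonempty := by simpa using (nonempty_of_mem hy).mono interior_subset
  obtain ⟨ε, hε, hball⟩ := Metric.nhds_basis_closedBall.mem_iff.1 (mem_interior_iff_mem_nhds.1 hy)
  have hcoercive : Tendsto (fun u : StrongDual ℝ E => logPartitionFn T u - u y)
      (cocompact _) atTop :=
    tendsto_atTop_mono (mul_norm_le_logPartitionFn_sub hε hball)
      (tendsto_norm_cocompact_atTop.const_mul_atTop hε)
  obtain ⟨u, hmin⟩ :=
    ((continuous_logPartitionFn hne).sub (continuous_eval_const y)).exists_forall_le hcoercive
  have hderiv : HasFDerivAt (fun u : StrongDual ℝ E => logPartitionFn T u - u y)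
      (ContinuousLinearMap.apply ℝ ℝ (gibbsMean T u) - ContinuousLinearMap.apply ℝ ℝ y) u :=
    (hasFDerivAt_logPartitionFn hne u).sub (ContinuousLinearMap.apply ℝ ℝ y).hasFDerivAt
  have hzero := IsLocalMin.hasFDerivAt_eq_zero (Filter.Eventually.of_forall hmin) hderiv
  refine ⟨u, (SeparatingDual.eq_iff_forall_dual_eq (R := ℝ)).2 fun g => ?_⟩
  simpa [sub_eq_zero] using DFunLike.congr_fun hzero g

theorem continuousOn_invFun_gibbsMean [FiniteDimensional ℝ E]
    (hT : (interior (convexHull ℝ (T : Set E))).Nonempty) :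
    ContinuousOn (invFun (gibbsMean T)) (interior (convexHull ℝ (T : Set E))) := by
  have hne : T.Nonempty := by simpa using hT.mono interior_subset
  refine continuousOn_invFun_of_isCompact_preimage (continuous_gibbsMean hne)
    (gibbsMean_injective hT) (fun y hy => exists_gibbsMean_eq hy) fun y hy => ?_
  obtain ⟨ε, hε, hball⟩ :=
    Metric.nhds_basis_closedBall.mem_iff.1 (mem_interior_iff_mem_nhds.1 hy)
  refine ⟨_, Metric.closedBall_mem_nhds y (half_pos hε), Metric.isCompact_of_isClosed_isBounded
    (Metric.isClosed_closedBall.preimage (continuous_gibbsMean hne))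
    ((Metric.isBounded_closedBall (x := 0) (r := logPartitionFn T 0 / (ε / 2))).subset
      fun u hu => ?_)⟩
  have hsub : Metric.closedBall (gibbsMean T u) (ε / 2) ⊆ convexHull ℝ (T : Set E) :=
    (Metric.closedBall_subset_closedBall' (by linarith [Metric.mem_closedBall.1 hu])).trans hball
  have hcoer := mul_norm_le_logPartitionFn_sub (half_pos hε) hsub u
  have hconv := logPartitionFn_sub_apply_gibbsMean_le hT u
  rw [mem_closedBall_zero_iff, le_div_iff₀' (half_pos hε)]
  linarith

end LogPartition

theorem isometry_latticeEmb : Isometry latticeEmb :=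
  isometry_intCast.prodMap isometry_intCast

theorem finite_latticeEmb_preimage {Θ : Set (ℝ × ℝ)} (hΘ : Bornology.IsBounded Θ) :
    (latticeEmb ⁻¹' Θ).Finite :=
  (Metric.isCompact_of_isClosed_isBounded (isClosed_discrete _)
    (isometry_latticeEmb.antilipschitz.isBounded_preimage hΘ)).finite_of_discrete

def logCoords (q : ℝ × ℝ) : StrongDual ℝ (ℝ × ℝ) :=
  log q.1 • ContinuousLinearMap.fst ℝ ℝ ℝ + log q.2 • ContinuousLinearMap.snd ℝ ℝ ℝ

def expCoords (u : StrongDual ℝ (ℝ × ℝ)) : ℝ × ℝ := (exp (u (1, 0)), exp (u (0, 1)))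

theorem logCoords_apply (q x : ℝ × ℝ) : logCoords q x = log q.1 * x.1 + log q.2 * x.2 := rfl

theorem expCoords_logCoords {q : ℝ × ℝ} (hq : q ∈ posQuad) : expCoords (logCoords q) = q := by
  simp [expCoords, logCoords_apply, exp_log hq.1, exp_log hq.2]

theorem logCoords_expCoords (u : StrongDual ℝ (ℝ × ℝ)) : logCoords (expCoords u) = u := by
  ext
  · simp [logCoords_apply, expCoords]
  · simp [logCoords_apply, expCoords]

theorem expCoords_mem_posQuad (u : StrongDual ℝ (ℝ × ℝ)) : expCoords u ∈ posQuad :=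
  ⟨exp_pos _, exp_pos _⟩

theorem continuous_expCoords : Continuous expCoords := by
  unfold expCoords; fun_prop

theorem continuousOn_logCoords : ContinuousOn logCoords posQuad := by
  unfold logCoords
  have h1 : ContinuousOn (fun q : ℝ × ℝ => log q.1) posQuad :=
    continuousOn_fst.log fun q hq => hq.1.ne'
  have h2 : ContinuousOn (fun q : ℝ × ℝ => log q.2) posQuad :=
    continuousOn_snd.log fun q hq => hq.2.ne'
  exact (h1.smul continuousOn_const).add (h2.smul continuousOn_const)

theorem zpow_mul_zpow_eq_exp_logCoords {q : ℝ × ℝ} (hq : q ∈ posQuad) (p : ℤ × ℤ) :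
    q.1 ^ p.1 * q.2 ^ p.2 = exp (logCoords q (latticeEmb p)) := by
  rw [logCoords_apply, exp_add, ← rpow_intCast, ← rpow_intCast, rpow_def_of_pos hq.1,
    rpow_def_of_pos hq.2]
  rfl

theorem momentMap_eq_gibbsMean {Θ : Set (ℝ × ℝ)} (hΘ : (latticeEmb ⁻¹' Θ).Finite)
    {q : ℝ × ℝ} (hq : q ∈ posQuad) :
    momentMap Θ q = gibbsMean (hΘ.toFinset.image latticeEmb) (logCoords q) := by
  have hinj : InjOn latticeEmb hΘ.toFinset := isometry_latticeEmb.injective.injOn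
  have h₁ := finsum_mem_eq_finite_toFinset_sum (fun p : ℤ × ℤ => q.1 ^ p.1 * q.2 ^ p.2) hΘ
  have h₂ := finsum_mem_eq_finite_toFinset_sum
    (fun p : ℤ × ℤ => (q.1 ^ p.1 * q.2 ^ p.2) • latticeEmb p) hΘ
  simp only [mem_preimage] at h₁ h₂
  rw [momentMap, h₁, h₂, gibbsMean, partitionFn, Finset.sum_image hinj, Finset.sum_image hinj]
  simp only [zpow_mul_zpow_eq_exp_logCoords hq]

theorem convexHull_latticeEmb_preimage {S : Finset (ℤ × ℤ)} {Θ : Set (ℝ × ℝ)}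
    (hΘ : Θ = convexHull ℝ (latticeEmb '' (S : Set (ℤ × ℤ))))
    (hfin : (latticeEmb ⁻¹' Θ).Finite) :
    convexHull ℝ ((hfin.toFinset.image latticeEmb : Finset (ℝ × ℝ)) : Set (ℝ × ℝ)) = Θ := by
  rw [Finset.coe_image, Finite.coe_toFinset]
  refine (convexHull_min (image_preimage_subset _ _) (hΘ ▸ convex_convexHull ℝ _)).antisymm ?_
  conv_lhs => rw [hΘ]
  exact convexHull_mono
    (image_mono fun p hp => hΘ ▸ subset_convexHull ℝ _ (mem_image_of_mem _ hp))

theorem exists_partialHomeomorph_momentMap {S : Finset (ℤ × ℤ)} {Θ : Set (ℝ × ℝ)}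
    (hΘ : Θ = convexHull ℝ (latticeEmb '' (S : Set (ℤ × ℤ)))) (hdim : (interior Θ).Nonempty) :
    ∃ e : PartialHomeomorph (ℝ × ℝ) (ℝ × ℝ),
      ⇑e = momentMap Θ ∧ e.source = posQuad ∧ e.target = interior Θ := by
  have hfin := finite_latticeEmb_preimage
    (hΘ ▸ isBounded_convexHull.2 (S.finite_toSet.image _).isBounded)
  set T := hfin.toFinset.image latticeEmb
  have hT : convexHull ℝ (T : Set (ℝ × ℝ)) = Θ := convexHull_latticeEmb_preimage hΘ hfin
  have hdim' : (interior (convexHull ℝ (T : Set (ℝ × ℝ)))).Nonempty := hT ▸ hdim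
  have hne : T.Nonempty := by simpa using hdim'.mono interior_subset
  refine ⟨{ toFun := momentMap Θ
            invFun := expCoords ∘ invFun (gibbsMean T)
            source := posQuad
            target := interior Θ
            map_source' := fun q hq => ?_
            map_target' := fun y _ => expCoords_mem_posQuad _
            left_inv' := fun q hq => ?_
            right_inv' := fun y hy => ?_
            continuousOn_toFun := ?_
            continuousOn_invFun := ?_ }, rfl, rfl, rfl⟩
  · have hmem := gibbsMean_mem_interior_convexHull hdim' (logCoords q)
    rw [hT] at hmem
    rwa [momentMap_eq_gibbsMean hfin hq]
  · simp only [comp_apply]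
    rw [momentMap_eq_gibbsMean hfin hq, leftInverse_invFun (gibbsMean_injective hdim'),
      expCoords_logCoords hq]
  · simp only [comp_apply]
    rw [momentMap_eq_gibbsMean hfin (expCoords_mem_posQuad _), logCoords_expCoords,
      invFun_eq (exists_gibbsMean_eq (by rwa [hT]))]
  · exact ((continuous_gibbsMean hne).comp_continuousOn continuousOn_logCoords).congr
      fun q hq => momentMap_eq_gibbsMean hfin hq
  · exact continuous_expCoords.comp_continuousOn (hT ▸ continuousOn_invFun_gibbsMean hdim')

theorem Real.continuousAt_sign_of_ne_zero {a : ℝ} (ha : a ≠ 0) : ContinuousAt Real.sign a := by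
  rcases ha.lt_or_gt with h | h
  · exact continuousAt_const.congr
      (by filter_upwards [Iio_mem_nhds h] with x hx using (sign_of_neg hx).symm)
  · exact continuousAt_const.congr
      (by filter_upwards [Ioi_mem_nhds h] with x hx using (sign_of_pos hx).symm)

def symmExt (f : ℝ × ℝ → ℝ × ℝ) (q : ℝ × ℝ) : ℝ × ℝ :=
  (Real.sign q.1 * (f (|q.1|, |q.2|)).1, Real.sign q.2 * (f (|q.1|, |q.2|)).2)

theorem tildeMomentMap_eq_symmExt (Θ : Set (ℝ × ℝ)) :
    tildeMomentMap Θ = symmExt (momentMap Θ) := rfl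

theorem abs_quadRefl {q : ℝ × ℝ} (hq : q ∈ posQuad) (s : Bool × Bool) :
    ((|(quadRefl s q).1|, |(quadRefl s q).2|) : ℝ × ℝ) = q := by
  rcases s with ⟨_ | _, _ | _⟩ <;> simp [quadRefl, abs_of_pos hq.1, abs_of_pos hq.2]

theorem symmExt_quadRefl (f : ℝ × ℝ → ℝ × ℝ) {q : ℝ × ℝ} (hq : q ∈ posQuad)
    (s : Bool × Bool) : symmExt f (quadRefl s q) = quadRefl s (f q) := by
  rw [symmExt, abs_quadRefl hq]
  rcases s with ⟨_ | _, _ | _⟩ <;>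
    simp [quadRefl, sign_of_pos hq.1, sign_of_pos hq.2, sign_of_neg, hq.1, hq.2]

theorem quadRefl_eq_quadRefl_iff {s s' : Bool × Bool} {q q' : ℝ × ℝ} (hq : q ∈ posQuad)
    (hq' : q' ∈ posQuad) : quadRefl s q = quadRefl s' q' ↔ s = s' ∧ q = q' := by
  obtain ⟨hq₁, hq₂⟩ := hq
  obtain ⟨hq₁', hq₂'⟩ := hq'
  rcases s with ⟨_ | _, _ | _⟩ <;> rcases s' with ⟨_ | _, _ | _⟩ <;>
    simp [quadRefl, Prod.ext_iff] <;> intros <;> linarith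

theorem mem_tildeSet {A : Set (ℝ × ℝ)} {x : ℝ × ℝ} :
    x ∈ tildeSet A ↔ ∃ s, ∃ q ∈ A, quadRefl s q = x := by
  simp [tildeSet]

theorem tildeSet_posQuad : tildeSet posQuad = realTorus := by
  ext x
  rw [mem_tildeSet]
  constructor
  · rintro ⟨⟨_ | _, _ | _⟩, q, ⟨hq₁, hq₂⟩, rfl⟩ <;>
      exact ⟨by simp [quadRefl, hq₁.ne'], by simp [quadRefl, hq₂.ne']⟩
  · rintro ⟨hx₁, hx₂⟩
    refine ⟨(decide (x.1 < 0), decide (x.2 < 0)), (|x.1|, |x.2|),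
      ⟨abs_pos.2 hx₁, abs_pos.2 hx₂⟩, Prod.ext ?_ ?_⟩ <;>
    · simp only [quadRefl, decide_eq_true_eq]
      split_ifs with h
      · exact abs_of_neg h ▸ neg_neg _
      · exact abs_of_nonneg (not_lt.1 h)

theorem disjoint_image_quadRefl {A : Set (ℝ × ℝ)} (hA : A ⊆ posQuad) {s s' : Bool × Bool}
    (hss' : s ≠ s') : Disjoint (quadRefl s '' A) (quadRefl s' '' A) := by
  rw [disjoint_left]
  rintro _ ⟨q, hq, rfl⟩ ⟨q', hq', heq⟩
  exact hss' ((quadRefl_eq_quadRefl_iff (hA hq') (hA hq)).1 heq).1.symm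

theorem ContinuousOn.symmExt {f : ℝ × ℝ → ℝ × ℝ} {A : Set (ℝ × ℝ)} (hA : A ⊆ posQuad)
    (hf : ContinuousOn f A) : ContinuousOn (symmExt f) (tildeSet A) := by
  have hfabs : ContinuousOn (fun x : ℝ × ℝ => f (|x.1|, |x.2|)) (tildeSet A) := by
    refine hf.comp (by fun_prop) fun x hx => ?_
    obtain ⟨s, q, hq, rfl⟩ := mem_tildeSet.1 hx
    rwa [abs_quadRefl (hA hq)]
  have hne : ∀ x ∈ tildeSet A, x.1 ≠ 0 ∧ x.2 ≠ 0 := fun x hx =>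
    (tildeSet_posQuad ▸ (iUnion_mono fun s => image_mono hA) hx : x ∈ realTorus)
  have hsign₁ : ContinuousOn (fun x : ℝ × ℝ => Real.sign x.1) (tildeSet A) :=
    continuousOn_of_forall_continuousAt fun x hx =>
      (Real.continuousAt_sign_of_ne_zero (hne x hx).1).comp continuousAt_fst
  have hsign₂ : ContinuousOn (fun x : ℝ × ℝ => Real.sign x.2) (tildeSet A) :=
    continuousOn_of_forall_continuousAt fun x hx =>
      (Real.continuousAt_sign_of_ne_zero (hne x hx).2).comp continuousAt_snd
  exact (hsign₁.mul (continuous_fst.comp_continuousOn hfabs)).prodMk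
    (hsign₂.mul (continuous_snd.comp_continuousOn hfabs))

def PartialHomeomorph.symmExt (e : PartialHomeomorph (ℝ × ℝ) (ℝ × ℝ))
    (hs : e.source ⊆ posQuad) (ht : e.target ⊆ posQuad) : PartialHomeomorph (ℝ × ℝ) (ℝ × ℝ) where
  toFun := _root_.symmExt e
  invFun := _root_.symmExt e.symm
  source := tildeSet e.source
  target := tildeSet e.target
  map_source' x hx := by
    obtain ⟨s, q, hq, rfl⟩ := mem_tildeSet.1 hx
    rw [symmExt_quadRefl _ (hs hq)]
    exact mem_tildeSet.2 ⟨s, e q, e.map_source hq, rfl⟩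
  map_target' y hy := by
    obtain ⟨s, q, hq, rfl⟩ := mem_tildeSet.1 hy
    rw [symmExt_quadRefl _ (ht hq)]
    exact mem_tildeSet.2 ⟨s, e.symm q, e.map_target hq, rfl⟩
  left_inv' x hx := by
    obtain ⟨s, q, hq, rfl⟩ := mem_tildeSet.1 hx
    rw [symmExt_quadRefl _ (hs hq), symmExt_quadRefl _ (ht (e.map_source hq)), e.left_inv hq]
  right_inv' y hy := by
    obtain ⟨s, q, hq, rfl⟩ := mem_tildeSet.1 hy
    rw [symmExt_quadRefl _ (ht hq), symmExt_quadRefl _ (hs (e.map_target hq)), e.right_inv hq]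
  continuousOn_toFun := e.continuousOn.symmExt hs
  continuousOn_invFun := e.continuousOn_symm.symmExt ht

theorem interior_convexHull_subset_posQuad {S : Set (ℤ × ℤ)} (hS : ∀ p ∈ S, 0 ≤ p.1 ∧ 0 ≤ p.2) :
    interior (convexHull ℝ (latticeEmb '' S)) ⊆ posQuad := by
  have hsub : convexHull ℝ (latticeEmb '' S) ⊆ Ici 0 ×ˢ Ici 0 := by
    refine convexHull_min ?_ ((convex_Ici 0).prod (convex_Ici 0))
    rintro _ ⟨p, hp, rfl⟩
    exact show (0 : ℝ) ≤ p.1 ∧ (0 : ℝ) ≤ p.2 from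
      ⟨Int.cast_nonneg (hS p hp).1, Int.cast_nonneg (hS p hp).2⟩
  have hint := interior_mono hsub
  rwa [interior_prod_eq, interior_Ici] at hint

/-- for a lattice polygon `Θ ⊆ ℝ²_{≥0}` with nonempty interior, the symmetric
extension φ̃_Θ of the moment map is well defined on (ℝ*)² (it satisfies the equivariance
φ̃_Θ(ρ(q)) = ρ(φ_Θ(q)) for all q in the positive quadrant and all ρ ∈ S) and it is a
homeomorphism of (ℝ*)² onto ⋃_{ρ∈S} ρ(int Θ); moreover the four sets ρ(int Θ) are pairwise
disjoint (in particular int Θ ⊆ ℝ²_{>0}). -/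
theorem tildeMomentMap_is_homeomorphism
    (S : Finset (ℤ × ℤ)) (hS : ∀ p ∈ S, 0 ≤ p.1 ∧ 0 ≤ p.2)
    (Θ : Set (ℝ × ℝ)) (hΘ : Θ = convexHull ℝ (latticeEmb '' (S : Set (ℤ × ℤ))))
    (hdim : (interior Θ).Nonempty) :
    (∀ s : Bool × Bool, ∀ q ∈ posQuad, tildeMomentMap Θ (quadRefl s q) = quadRefl s (momentMap Θ q)) ∧
    interior Θ ⊆ posQuad ∧
    (∀ s s' : Bool × Bool, s ≠ s' →
      Disjoint (quadRefl s '' interior Θ) (quadRefl s' '' interior Θ)) ∧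
    Set.InjOn (tildeMomentMap Θ) realTorus ∧
    ContinuousOn (tildeMomentMap Θ) realTorus ∧
    tildeMomentMap Θ '' realTorus = tildeSet (interior Θ) ∧
    ∃ ψ : ℝ × ℝ → ℝ × ℝ,
      ContinuousOn ψ (tildeSet (interior Θ)) ∧
      (∀ q ∈ realTorus, ψ (tildeMomentMap Θ q) = q) ∧
      (∀ p ∈ tildeSet (interior Θ), ψ p ∈ realTorus ∧ tildeMomentMap Θ (ψ p) = p) := by
  have hpos : interior Θ ⊆ posQuad := hΘ ▸ interior_convexHull_subset_posQuad hS
  obtain ⟨e, he, hsource, htarget⟩ := exists_partialHomeomorph_momentMap hΘ hdim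
  set f := e.symmExt hsource.le (htarget ▸ hpos)
  have hf : ⇑f = tildeMomentMap Θ := by rw [tildeMomentMap_eq_symmExt, ← he]; rfl
  have hfsource : f.source = realTorus := by rw [← tildeSet_posQuad, ← hsource]; rfl
  have hftarget : f.target = tildeSet (interior Θ) := by rw [← htarget]; rfl
  refine ⟨fun s q hq => symmExt_quadRefl _ hq s, hpos, fun _ _ => disjoint_image_quadRefl hpos, ?_⟩
  rw [← hf, ← hfsource, ← hftarget]
  exact ⟨f.injOn, f.continuousOn, f.image_source_eq_target, f.symm, f.continuousOn_symm,
    fun _ => f.left_inv, fun _ hp => ⟨f.map_target hp, f.right_inv hp⟩⟩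
end
end

section
/- Let n, m be coprime positive integers, e ≥ 1 an integer, and c ≥ 1, d ≥ 1 integers with c·m − d·n = 1. Let F ∈ ℝ[x,y] be of the form F = (y^n − x^m)^e + Σ_{(i,j)∈S} c_{i,j} x^i y^j, where every exponent (i,j) occurring in the sum satisfies n·i + m·j > n·m·e. Then there exists a polynomial G ∈ ℝ[x,u] such that F(u^c x^n, u^d x^m) = u^{d·n·e} · x^{m·n·e} · G(x,u), and moreover G(0,u) = (1−u)^e and G(x,0) = 1. -/
/-!
Under `x₁ = u^c x^n`, `y₁ = u^d x^m` a monomial `x₁^i y₁^j` becomes `u^(c i + d j) x^(n i + m j)`.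
Since `c m = d n + 1`, the leading form becomes `(y₁^n - x₁^m)^e = u^(d n e) x^(m n e) (1 - u)^e`,
while `m (c i + d j) = d (n i + m j) + i` shows that every monomial above the Newton diagonal
`n i + m j > n m e` is divisible by `u^(d n e + 1) x^(m n e + 1)`. Hence
`G = (1 - u)^e + u x Q`, whose correction term `u x Q` vanishes on both axes.
-/

open MvPolynomial

theorem lt_chart_exponent {n m c d e i j : ℕ} (hd : 1 ≤ d) (hcm : c * m = d * n + 1)
    (h : n * m * e < n * i + m * j) : d * n * e < c * i + d * j := by
  have hexp : m * (c * i + d * j) = d * (n * i + m * j) + i := by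
    rw [mul_add, ← mul_assoc, mul_comm m c, hcm]; ring
  refine Nat.lt_of_mul_lt_mul_left (a := m) ?_
  calc m * (d * n * e) = d * (n * m * e) := by ring
    _ < d * (n * i + m * j) := Nat.mul_lt_mul_of_pos_left h hd
    _ ≤ m * (c * i + d * j) := by omega

theorem pow_mul_pow_dvd_aeval_chart {K A : Type*} [CommSemiring K] [CommSemiring A] [Algebra K A]
    (x u : A) {c d n m p q : ℕ} (R : MvPolynomial (Fin 2) K)
    (h : ∀ s ∈ R.support, p ≤ c * s 0 + d * s 1 ∧ q ≤ n * s 0 + m * s 1) :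
    u ^ p * x ^ q ∣ aeval ![u ^ c * x ^ n, u ^ d * x ^ m] R := by
  rw [R.as_sum, map_sum]
  refine Finset.dvd_sum fun s hs => ?_
  obtain ⟨hp, hq⟩ := h s hs
  rw [aeval_monomial, Finsupp.prod_fintype _ _ fun _ => pow_zero _, Fin.prod_univ_two]
  have hmono : (![u ^ c * x ^ n, u ^ d * x ^ m] 0) ^ s 0 * (![u ^ c * x ^ n, u ^ d * x ^ m] 1) ^ s 1
      = u ^ (c * s 0 + d * s 1) * x ^ (n * s 0 + m * s 1) := by
    simp only [Matrix.cons_val_zero, Matrix.cons_val_one]; ring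
  rw [hmono]
  exact Dvd.dvd.mul_left (mul_dvd_mul (pow_dvd_pow u hp) (pow_dvd_pow x hq)) _

theorem chart_sub_eq {A : Type*} [CommRing A] (x u : A) {c d n m : ℕ} (hcm : c * m = d * n + 1) :
    (u ^ d * x ^ m) ^ n - (u ^ c * x ^ n) ^ m = u ^ (d * n) * x ^ (m * n) * (1 - u) := by
  rw [mul_pow, mul_pow, ← pow_mul, ← pow_mul, ← pow_mul, ← pow_mul, hcm, pow_add, mul_comm n m]
  ring

theorem strict_transform_of_sqh_polynomial_general
    (n m : ℕ)
    (e : ℕ) (c d : ℕ) (hd : 1 ≤ d)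
    (hcd : (c : ℤ) * (m : ℤ) - (d : ℤ) * (n : ℤ) = 1)
    (F R : MvPolynomial (Fin 2) ℝ)
    (hF : F = (X 1 ^ n - X 0 ^ m) ^ e + R)
    (hR : ∀ d' ∈ R.support, n * m * e < n * d' 0 + m * d' 1) :
    ∃ G : MvPolynomial (Fin 2) ℝ,
      MvPolynomial.aeval
          ![(X 1 : MvPolynomial (Fin 2) ℝ) ^ c * X 0 ^ n, (X 1 : MvPolynomial (Fin 2) ℝ) ^ d * X 0 ^ m] F
        = X 1 ^ (d * n * e) * X 0 ^ (m * n * e) * G ∧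
      (∀ u : ℝ, MvPolynomial.eval ![(0 : ℝ), u] G = (1 - u) ^ e) ∧
      (∀ x : ℝ, MvPolynomial.eval ![x, (0 : ℝ)] G = 1) := by
  subst hF
  have hcm : c * m = d * n + 1 := by zify; linarith
  obtain ⟨Q, hQ⟩ := pow_mul_pow_dvd_aeval_chart (X 0 : MvPolynomial (Fin 2) ℝ) (X 1)
    (c := c) (d := d) (n := n) (m := m) (p := d * n * e + 1) (q := m * n * e + 1) R fun s hs =>
      ⟨lt_chart_exponent hd hcm (hR s hs), by linarith [hR s hs, mul_comm m n]⟩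
  refine ⟨(1 - X 1) ^ e + X 1 * X 0 * Q, ?_, fun u => by simp, fun x => by simp⟩
  rw [map_add, hQ, map_pow, map_sub, map_pow, map_pow, aeval_X, aeval_X]
  simp only [Matrix.cons_val_zero, Matrix.cons_val_one]
  rw [chart_sub_eq _ _ hcm, mul_pow, mul_pow, ← pow_mul, ← pow_mul]
  ring

/-- for the semi-quasi-homogeneous polynomial
`F = (y^n − x^m)^e + (higher order terms)` and the toric chart substitution
`x₁ = u^c x^n`, `y₁ = u^d x^m` (with `c·m − d·n = 1`), one has
`F(u^c x^n, u^d x^m) = u^{d·n·e} · x^{m·n·e} · G(x,u)` for a polynomial `G` (the strict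
transform function) satisfying `G(0,u) = (1−u)^e` and `G(x,0) = 1`.
Here the first variable of `F` is `x₁`, its second variable is `y₁`, the first variable of
`G` is `x` and its second variable is `u`. -/
theorem strict_transform_of_sqh_polynomial
    (n m : ℕ) (hn : 0 < n) (hm : 0 < m) (hcop : Nat.Coprime n m)
    (e : ℕ) (he : 1 ≤ e) (c d : ℕ) (hc : 1 ≤ c) (hd : 1 ≤ d)
    (hcd : (c : ℤ) * (m : ℤ) - (d : ℤ) * (n : ℤ) = 1)
    (F R : MvPolynomial (Fin 2) ℝ)
    (hF : F = (X 1 ^ n - X 0 ^ m) ^ e + R)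
    (hR : ∀ d' ∈ R.support, n * m * e < n * d' 0 + m * d' 1) :
    ∃ G : MvPolynomial (Fin 2) ℝ,
      MvPolynomial.aeval
          ![(X 1 : MvPolynomial (Fin 2) ℝ) ^ c * X 0 ^ n, (X 1 : MvPolynomial (Fin 2) ℝ) ^ d * X 0 ^ m] F
        = X 1 ^ (d * n * e) * X 0 ^ (m * n * e) * G ∧
      (∀ u : ℝ, MvPolynomial.eval ![(0 : ℝ), u] G = (1 - u) ^ e) ∧
      (∀ x : ℝ, MvPolynomial.eval ![x, (0 : ℝ)] G = 1) :=
  strict_transform_of_sqh_polynomial_general n m e c d hd hcd F R hF hR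
end
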